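/- Let A ∈ ℝ^{n×n} with nonzero rows a_i and let r ∈ ℝⁿ. If α = max_i ‖A a_i‖²/‖a_i‖² and 2‖Aᵀ A r‖² ≥ α ‖A r‖², then the one-step randomized Kaczmarz expectation satisfies E‖A r'‖² ≤ ‖A r‖², i.e., ‖Ar‖² is nonincreasing in expectation whenever the residual is dominated by large singular directions. -/

import Mathlib

/-!
Expanding `‖A (r - c aᵢ)‖²` and averaging with weights `‖aᵢ‖² / ‖A‖_F²` gives the exact one-step
identity `‖A‖_F² E‖A r'‖² = ‖A‖_F² ‖A r‖² - 2 ‖Aᵀ A r‖² + ∑ᵢ (A r)ᵢ² ‖A aᵢ‖² / ‖aᵢ‖²`: the cross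
terms collapse because `∑ᵢ (A r)ᵢ aᵢ = Aᵀ A r`. Bounding each ratio `‖A aᵢ‖² / ‖aᵢ‖²` by `α` and using
`∑ᵢ (A r)ᵢ² = ‖A r‖²` yields `E‖A r'‖² ≤ (1 + α / ‖A‖_F²) ‖A r‖² - (2 / ‖A‖_F²) ‖Aᵀ A r‖²`, which is
at most `‖A r‖²` under the domination hypothesis.
-/

open RealInnerProductSpace Finset Matrix
noncomputable section

/-- Coercion of a plain vector to Euclidean space (for norms and inner products). -/
def toE {n : ℕ} (v : Fin n → ℝ) : EuclideanSpace ℝ (Fin n) := WithLp.toLp 2 v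

def kaczmarzStep {n : ℕ} (a r : Fin n → ℝ) : Fin n → ℝ :=
  r - (⟪toE a, toE r⟫ / ‖toE a‖ ^ 2) • a

lemma inner_toE {n : ℕ} (u v : Fin n → ℝ) : ⟪toE u, toE v⟫ = u ⬝ᵥ v := by
  simp [toE, PiLp.inner_apply, dotProduct, mul_comm]

lemma norm_toE_sq {n : ℕ} (v : Fin n → ℝ) : ‖toE v‖ ^ 2 = v ⬝ᵥ v := by
  rw [← real_inner_self_eq_norm_sq, inner_toE]

lemma toE_sub {n : ℕ} (u v : Fin n → ℝ) : toE (u - v) = toE u - toE v := rfl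

lemma toE_smul {n : ℕ} (c : ℝ) (v : Fin n → ℝ) : toE (c • v) = c • toE v := rfl

section

variable {m n : ℕ}

lemma inner_toE_row (A : Matrix (Fin m) (Fin n) ℝ) (r : Fin n → ℝ) (i : Fin m) :
    ⟪toE (A i), toE r⟫ = (A *ᵥ r) i := by
  rw [inner_toE]
  rfl

lemma sum_mul_dotProduct_mulVec_row (A : Matrix (Fin m) (Fin n) ℝ) (u v : Fin m → ℝ) :
    ∑ i, u i * (v ⬝ᵥ A *ᵥ A i) = (Aᵀ *ᵥ v) ⬝ᵥ (Aᵀ *ᵥ u) := by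
  rw [mulVec_transpose, mulVec_transpose, vecMul_eq_sum u A, dotProduct_sum]
  simp only [dotProduct_mulVec, dotProduct_smul, smul_eq_mul]

lemma sq_norm_toE_mulVec_sub_smul (B : Matrix (Fin m) (Fin n) ℝ) (r a : Fin n → ℝ) (c : ℝ) :
    ‖toE (B *ᵥ (r - c • a))‖ ^ 2
      = ‖toE (B *ᵥ r)‖ ^ 2 - 2 * c * ⟪toE (B *ᵥ r), toE (B *ᵥ a)⟫
        + c ^ 2 * ‖toE (B *ᵥ a)‖ ^ 2 := by
  rw [mulVec_sub, mulVec_smul, toE_sub, toE_smul, norm_sub_sq_real, real_inner_smul_right,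
    norm_smul, mul_pow, Real.norm_eq_abs, sq_abs]
  ring

lemma sq_norm_mul_sq_norm_toE_mulVec_kaczmarzStep (B : Matrix (Fin m) (Fin n) ℝ)
    (r a : Fin n → ℝ) :
    ‖toE a‖ ^ 2 * ‖toE (B *ᵥ kaczmarzStep a r)‖ ^ 2
      = ‖toE a‖ ^ 2 * ‖toE (B *ᵥ r)‖ ^ 2 - 2 * (⟪toE a, toE r⟫ * ⟪toE (B *ᵥ r), toE (B *ᵥ a)⟫)
        + ⟪toE a, toE r⟫ ^ 2 * (‖toE (B *ᵥ a)‖ ^ 2 / ‖toE a‖ ^ 2) := by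
  rcases eq_or_ne a 0 with rfl | ha
  · simp [toE]
  have : ‖toE a‖ ≠ 0 := by simpa [toE] using ha
  rw [kaczmarzStep, sq_norm_toE_mulVec_sub_smul]
  field_simp

lemma sum_sq_norm_row_mul_sq_norm_toE_mulVec_kaczmarzStep (A : Matrix (Fin m) (Fin n) ℝ)
    (r : Fin n → ℝ) :
    ∑ i, ‖toE (A i)‖ ^ 2 * ‖toE (A *ᵥ kaczmarzStep (A i) r)‖ ^ 2
      = (∑ i, ‖toE (A i)‖ ^ 2) * ‖toE (A *ᵥ r)‖ ^ 2 - 2 * ‖toE (Aᵀ *ᵥ (A *ᵥ r))‖ ^ 2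
        + ∑ i, (A *ᵥ r) i ^ 2 * (‖toE (A *ᵥ A i)‖ ^ 2 / ‖toE (A i)‖ ^ 2) := by
  simp only [sq_norm_mul_sq_norm_toE_mulVec_kaczmarzStep]
  simp only [inner_toE_row, sum_add_distrib, sum_sub_distrib, ← sum_mul, ← mul_sum]
  rw [norm_toE_sq (Aᵀ *ᵥ _), ← sum_mul_dotProduct_mulVec_row]
  simp only [inner_toE]

lemma expected_sq_norm_toE_mulVec_kaczmarzStep_le (A : Matrix (Fin m) (Fin n) ℝ)
    (r : Fin n → ℝ) (α : ℝ) (hα : ∀ i, ‖toE (A *ᵥ A i)‖ ^ 2 / ‖toE (A i)‖ ^ 2 ≤ α) :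
    ∑ i, (‖toE (A i)‖ ^ 2 / (∑ j, ‖toE (A j)‖ ^ 2)) * ‖toE (A *ᵥ kaczmarzStep (A i) r)‖ ^ 2
      ≤ (1 + α / ∑ j, ‖toE (A j)‖ ^ 2) * ‖toE (A *ᵥ r)‖ ^ 2
        - 2 / (∑ j, ‖toE (A j)‖ ^ 2) * ‖toE (Aᵀ *ᵥ (A *ᵥ r))‖ ^ 2 := by
  have hS : ∑ i, (A *ᵥ r) i ^ 2 * (‖toE (A *ᵥ A i)‖ ^ 2 / ‖toE (A i)‖ ^ 2)
      ≤ α * ‖toE (A *ᵥ r)‖ ^ 2 := calc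
    _ ≤ ∑ i, (A *ᵥ r) i ^ 2 * α := sum_le_sum fun i _ => by gcongr; exact hα i
    _ = α * ‖toE (A *ᵥ r)‖ ^ 2 := by
      rw [← sum_mul, mul_comm, norm_toE_sq]
      simp only [dotProduct, sq]
  simp only [div_mul_eq_mul_div _ (∑ j, ‖toE (A j)‖ ^ 2), ← sum_div,
    sum_sq_norm_row_mul_sq_norm_toE_mulVec_kaczmarzStep]
  have hF : 0 ≤ ∑ j, ‖toE (A j)‖ ^ 2 := sum_nonneg fun j _ => sq_nonneg _
  generalize ∑ j, ‖toE (A j)‖ ^ 2 = F at hF ⊢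
  rcases hF.eq_or_lt with rfl | hF
  · simp
  · calc _ ≤ (F * ‖toE (A *ᵥ r)‖ ^ 2 - 2 * ‖toE (Aᵀ *ᵥ (A *ᵥ r))‖ ^ 2
            + α * ‖toE (A *ᵥ r)‖ ^ 2) / F := by gcongr
      _ = _ := by field_simp; ring

end

theorem kaczmarz_nonincreasing_when_dominated_general {n : ℕ} (A : Matrix (Fin n) (Fin n) ℝ)
    (r : Fin n → ℝ)
    (α : ℝ) (hα : IsGreatest (Set.range fun i => ‖toE (A.mulVec (A i))‖ ^ 2 / ‖toE (A i)‖ ^ 2) α)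
    (hdom : 2 * ‖toE (Aᵀ.mulVec (A.mulVec r))‖ ^ 2 ≥ α * ‖toE (A.mulVec r)‖ ^ 2) :
    ∑ i, (‖toE (A i)‖ ^ 2 / (∑ j, ‖toE (A j)‖ ^ 2)) *
        ‖toE (A.mulVec (r - (⟪toE (A i), toE r⟫ / ‖toE (A i)‖ ^ 2) • A i))‖ ^ 2
      ≤ ‖toE (A.mulVec r)‖ ^ 2 := by
  have hF : 0 ≤ ∑ j, ‖toE (A j)‖ ^ 2 := sum_nonneg fun j _ => sq_nonneg _
  calc _ ≤ _ := expected_sq_norm_toE_mulVec_kaczmarzStep_le A r α fun i => hα.2 ⟨i, rfl⟩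
    _ = ‖toE (A *ᵥ r)‖ ^ 2 + (α * ‖toE (A *ᵥ r)‖ ^ 2 - 2 * ‖toE (Aᵀ *ᵥ (A *ᵥ r))‖ ^ 2)
          / ∑ j, ‖toE (A j)‖ ^ 2 := by ring
    _ ≤ ‖toE (A *ᵥ r)‖ ^ 2 :=
      add_le_of_nonpos_right (div_nonpos_of_nonpos_of_nonneg (by linarith) hF)

/-- If `2‖Aᵀ A r‖² ≥ α ‖A r‖²` then `‖A r‖²` is nonincreasing in expectation. -/
theorem kaczmarz_nonincreasing_when_dominated {n : ℕ} (A : Matrix (Fin n) (Fin n) ℝ)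
    (hrows : ∀ i, A i ≠ 0) (r : Fin n → ℝ)
    (α : ℝ) (hα : IsGreatest (Set.range fun i => ‖toE (A.mulVec (A i))‖ ^ 2 / ‖toE (A i)‖ ^ 2) α)
    (hdom : 2 * ‖toE (Aᵀ.mulVec (A.mulVec r))‖ ^ 2 ≥ α * ‖toE (A.mulVec r)‖ ^ 2) :
    ∑ i, (‖toE (A i)‖ ^ 2 / (∑ j, ‖toE (A j)‖ ^ 2)) *
        ‖toE (A.mulVec (r - (⟪toE (A i), toE r⟫ / ‖toE (A i)‖ ^ 2) • A i))‖ ^ 2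
      ≤ ‖toE (A.mulVec r)‖ ^ 2 :=
  kaczmarz_nonincreasing_when_dominated_general A r α hα hdom
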